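/- arXiv:2602.18316 — 4 statements merged into one kernel-verified Lean document; each statement's English description precedes it below -/
import Mathlib

section
/- If a sequence {a_i}_{i=1,...,n} of real numbers satisfies that every triple (a_i, a_j, a_k) with i < j < k has type T1 (i.e. 0 ≤ a_j - a_i ≤ a_k - a_j), then the shifted sequence {a_i - a_1}_{i=1,...,n} is exponential, i.e. 0 ≤ 2(a_i - a_1) ≤ a_{i+1} - a_1 for all 2 ≤ i ≤ n-1 (indices where both terms are defined). -/
/-- If every triple of a sequence has type T1, the shifted sequence is exponential. -/
theorem stmt_1 (n : ℕ) (a : ℕ → ℝ)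
    (h : ∀ i j k : ℕ, 1 ≤ i → i < j → j < k → k ≤ n →
      0 ≤ a j - a i ∧ a j - a i ≤ a k - a j) :
    ∀ i : ℕ, 2 ≤ i → i + 1 ≤ n →
      0 ≤ 2 * (a i - a 1) ∧ 2 * (a i - a 1) ≤ a (i + 1) - a 1 := by
  intro i hi hin
  obtain ⟨h_nonneg, h_gap⟩ := h 1 i (i + 1) le_rfl (by omega) (by omega) hin
  exact ⟨by linarith, by linarith⟩
end

section
/- Let r, s, q be positive integers and let H be the complete r-uniform hypergraph on N vertices with a labeling γ : E(H) → ℝ^s such that for every edge f, there are at most q edges f' with |f ∩ f'| = r-1 and |γ(f)_i - γ(f')_i| < 1 for some i ∈ [s]. Then there exists a subset of vertices of size at least c·N^{1/(2r-1)} (where c > 0 depends only on r, s, q) on which the induced complete hypergraph H' satisfies |γ(f)_i - γ(f')_i| ≥ 1 for every distinct pair of edges f, f' of H' and every i ∈ [s]. -/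
/-
Pass to a random `m`-subset `S` of the vertices, `m ≈ (N / K) ^ (1 / (2r - 1))` for a suitable
constant `K`, and delete the vertices of one edge of every close pair inside `S`. For an edge `f`
and `T ⊂ f`, an edge `h` with `f ∩ h = T` that is close to `f` in coordinate `i` has `γ h i` in
one of two unit windows around `γ f i`. Erasing a vertex outside `T` maps the edges `h ⊇ T` with
`γ h i` in a fixed window onto `(r - 1)`-sets containing `T`, and each fibre has at most `q + 1`
elements because any two of its members are close neighbours; so there are `O(N ^ (r - 1 - #T))`
such `h`. Since `f ∪ h` has `2r - #T` vertices, the expected number of close pairs inside `S` is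
`O(m ^ (2r) / N) ≤ m / (4r)`, and the deletion keeps at least `3m / 4` vertices.
-/

open Finset
open scoped Classical

lemma Nat.choose_sub_mul_pow_le {n m k : ℕ} (hk : k ≤ m) (hm : m ≤ n) :
    (n - k).choose (m - k) * n ^ k ≤ n.choose m * m ^ k := by
  induction k with
  | zero => simp
  | succ k ih =>
    obtain ⟨a, rfl⟩ : ∃ a, n = a + 1 + k := ⟨n - (k + 1), by omega⟩
    obtain ⟨b, rfl⟩ : ∃ b, m = b + 1 + k := ⟨m - (k + 1), by omega⟩
    have hpascal := Nat.add_one_mul_choose_eq a b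
    have hmono : a.choose b ≤ (a + 1).choose (b + 1) := by
      rw [Nat.choose_succ_succ]; exact Nat.le_add_right _ _
    have step : (a + 1 + k) * a.choose b ≤ (b + 1 + k) * (a + 1).choose (b + 1) := by
      nlinarith
    calc (a + 1 + k - (k + 1)).choose (b + 1 + k - (k + 1)) * (a + 1 + k) ^ (k + 1)
        = (a + 1 + k) * a.choose b * (a + 1 + k) ^ k := by
          rw [show a + 1 + k - (k + 1) = a by omega, show b + 1 + k - (k + 1) = b by omega]; ring
      _ ≤ (b + 1 + k) * (a + 1).choose (b + 1) * (a + 1 + k) ^ k := Nat.mul_le_mul_right _ step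
      _ = (b + 1 + k) * ((a + 1 + k - k).choose (b + 1 + k - k) * (a + 1 + k) ^ k) := by
          rw [Nat.add_sub_cancel, Nat.add_sub_cancel]; ring
      _ ≤ (b + 1 + k) * ((a + 1 + k).choose (b + 1 + k) * (b + 1 + k) ^ k) :=
          Nat.mul_le_mul_left _ (ih (by omega))
      _ = _ := by ring

lemma exists_mul_pow_le_and_rpow_le {K N d : ℕ} (hK : 1 ≤ K) (hKN : K ≤ N) (hd : 1 ≤ d) :
    ∃ m : ℕ, 1 ≤ m ∧ K * m ^ d ≤ N ∧ (N : ℝ) ^ ((1 : ℝ) / d) ≤ 2 * K * m := by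
  have hK0 : (0 : ℝ) < K := by exact_mod_cast hK
  have hNK : (1 : ℝ) ≤ N / K := by rw [one_le_div hK0]; exact_mod_cast hKN
  set x := ((N : ℝ) / K) ^ ((1 : ℝ) / d)
  have hx : 1 ≤ x := Real.one_le_rpow hNK (by positivity)
  have hm : 1 ≤ ⌊x⌋₊ := Nat.le_floor (by simpa using hx)
  refine ⟨⌊x⌋₊, hm, ?_, ?_⟩
  · have hxd : x ^ d = N / K := by
      simp only [x, one_div]; exact Real.rpow_inv_natCast_pow (by positivity) (by omega)
    have := hxd ▸ pow_le_pow_left₀ (Nat.cast_nonneg _) (Nat.floor_le (by positivity)) d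
    rw [le_div_iff₀ hK0] at this
    exact_mod_cast (by linarith : (K : ℝ) * ⌊x⌋₊ ^ d ≤ N)
  · have hx2 : x ≤ 2 * ⌊x⌋₊ := by
      have := Nat.lt_floor_add_one x
      have : (1 : ℝ) ≤ ⌊x⌋₊ := by exact_mod_cast hm
      linarith
    have hKd : (K : ℝ) ^ ((1 : ℝ) / d) ≤ K :=
      Real.rpow_le_self_of_one_le (by exact_mod_cast hK)
        (div_le_one_of_le₀ (by exact_mod_cast hd) (by positivity))
    calc (N : ℝ) ^ ((1 : ℝ) / d) = x * (K : ℝ) ^ ((1 : ℝ) / d) := by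
          rw [← Real.mul_rpow (by positivity) (by positivity), div_mul_cancel₀ _ hK0.ne']
      _ ≤ 2 * ⌊x⌋₊ * K := mul_le_mul hx2 hKd (by positivity) (by positivity)
      _ = 2 * K * ⌊x⌋₊ := by ring

variable {α ι : Type*}

def FewCloseNeighbours [DecidableEq α] (r q : ℕ) (γ : Finset α → ι → ℝ) : Prop :=
  ∀ f : Finset α, #f = r →
    {f' : Finset α | #f' = r ∧ #(f ∩ f') = r - 1 ∧ ∃ i, |γ f i - γ f' i| < 1}.ncard ≤ q

def IsSeparated (r : ℕ) (γ : Finset α → ι → ℝ) (U : Finset α) : Prop :=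
  ∀ f f' : Finset α, f ⊆ U → f' ⊆ U → #f = r → #f' = r → f ≠ f' →
    ∀ i, 1 ≤ |γ f i - γ f' i|

noncomputable def closePairs [Fintype α] (r : ℕ) (γ : Finset α → ι → ℝ) :
    Finset (Finset α × Finset α) :=
  {p ∈ univ.powersetCard r ×ˢ univ.powersetCard r |
    p.1 ≠ p.2 ∧ ∃ i, |γ p.1 i - γ p.2 i| < 1}

variable {r q : ℕ} {γ : Finset α → ι → ℝ}

lemma isSeparated_of_card_le_one {U : Finset α} (hU : #U ≤ 1) : IsSeparated r γ U := by
  intro f f' hf hf' hfr hf'r hne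
  refine absurd ?_ hne
  obtain rfl | hfne := f.eq_empty_or_nonempty
  · exact (card_eq_zero.1 (hf'r.trans hfr.symm)).symm
  have hf'ne : f'.Nonempty := card_pos.1 (hf'r ▸ hfr ▸ hfne.card_pos)
  rw [eq_of_subset_of_card_le hf (hU.trans hfne.card_pos),
    eq_of_subset_of_card_le hf' (hU.trans hf'ne.card_pos)]

lemma exists_isSeparated_of_card_lt [Fintype α] {K d : ℕ} (hd : 1 ≤ d)
    (hK : Fintype.card α < K) :
    ∃ U : Finset α,
      (Fintype.card α : ℝ) ^ ((1 : ℝ) / d) ≤ K * #U ∧ IsSeparated r γ U := by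
  obtain ⟨U, -, hU⟩ := exists_subset_card_eq (s := (univ : Finset α))
    (n := min (Fintype.card α) 1) (by simp)
  refine ⟨U, ?_, isSeparated_of_card_le_one (by omega)⟩
  rcases (Fintype.card α).eq_zero_or_pos with h0 | hpos
  · rw [h0, Nat.cast_zero, Real.zero_rpow (by positivity)]
    positivity
  · rw [hU, min_eq_right hpos, Nat.cast_one, mul_one]
    calc (Fintype.card α : ℝ) ^ ((1 : ℝ) / d) ≤ Fintype.card α :=
          Real.rpow_le_self_of_one_le (by exact_mod_cast hpos)
            (div_le_one_of_le₀ (by exact_mod_cast hd) (by positivity))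
      _ ≤ K := by exact_mod_cast hK.le

section Counting

variable [DecidableEq α] [Fintype α]

lemma card_le_succ_of_pairwise_close (hγ : FewCloseNeighbours r q γ) {F : Finset (Finset α)}
    {b : Finset α} (hb : #b = r - 1) (hF : ∀ h ∈ F, #h = r ∧ b ⊆ h)
    (hclose : ∀ h ∈ F, ∀ h' ∈ F, ∃ i, |γ h i - γ h' i| < 1) : #F ≤ q + 1 := by
  obtain rfl | ⟨h₀, h₀F⟩ := F.eq_empty_or_nonempty
  · simp
  have hsub : (↑(F.erase h₀) : Set (Finset α)) ⊆
      {f' | #f' = r ∧ #(h₀ ∩ f') = r - 1 ∧ ∃ i, |γ h₀ i - γ f' i| < 1} := by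
    intro h hh
    obtain ⟨hne, hF'⟩ := mem_erase.1 hh
    obtain ⟨hr₀, hb₀⟩ := hF h₀ h₀F
    obtain ⟨hr, hbh⟩ := hF h hF'
    have hlow : r - 1 ≤ #(h₀ ∩ h) := hb ▸ card_le_card (subset_inter hb₀ hbh)
    have hhigh : #(h₀ ∩ h) < r := by
      refine lt_of_le_of_ne (hr₀ ▸ card_le_card inter_subset_left) fun heq => hne ?_
      have h₀h : h₀ ⊆ h :=
        inter_eq_left.1 (eq_of_subset_of_card_le inter_subset_left (by omega))
      exact (eq_of_subset_of_card_le h₀h (by omega)).symm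
    exact ⟨hr, by omega, hclose h₀ h₀F h hF'⟩
  calc #F = #(F.erase h₀) + 1 := (card_erase_add_one h₀F).symm
    _ ≤ q + 1 := by
      gcongr
      rw [← Set.ncard_coe_finset]
      exact (Set.ncard_le_ncard hsub (Set.toFinite _)).trans (hγ h₀ (hF h₀ h₀F).1)

lemma card_window_le (hγ : FewCloseNeighbours r q γ) (i : ι) (a : ℝ) {T : Finset α}
    (hT : #T < r) :
    #{h ∈ (univ : Finset α).powersetCard r | T ⊆ h ∧ γ h i ∈ Set.Ico a (a + 1)}
      ≤ (q + 1) * (Fintype.card α - #T).choose (r - 1 - #T) := by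
  set W := {h ∈ (univ : Finset α).powersetCard r | T ⊆ h ∧ γ h i ∈ Set.Ico a (a + 1)}
  set B := {b ∈ (univ : Finset α).powersetCard (r - 1) | T ⊆ b}
  have hB : #B = (Fintype.card α - #T).choose (r - 1 - #T) := by
    rw [← card_univ]
    exact card_filter_powersetCard_subset T univ (r - 1) (subset_univ T) (by omega)
  have key := card_mul_le_card_mul (fun h b => b ⊆ h) (s := W) (t := B) (m := 1) (n := q + 1)
    ?_ ?_
  · rw [mul_one, hB] at key
    linarith
  · intro h hh
    simp only [W, mem_filter, mem_powersetCard] at hh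
    obtain ⟨⟨-, hr⟩, hTh, -⟩ := hh
    obtain ⟨x, hx⟩ : (h \ T).Nonempty := by
      rw [← card_pos, card_sdiff_of_subset hTh]; omega
    obtain ⟨hxh, hxT⟩ := mem_sdiff.1 hx
    refine one_le_card.2 ⟨h.erase x, mem_filter.2 ⟨?_, erase_subset x h⟩⟩
    refine mem_filter.2 ⟨mem_powersetCard.2 ⟨subset_univ _, ?_⟩, ?_⟩
    · rw [card_erase_of_mem hxh, hr]
    · exact fun y hy => mem_erase.2 ⟨fun hyx => hxT (hyx ▸ hy), hTh hy⟩
  · intro b hb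
    simp only [B, mem_filter, mem_powersetCard] at hb
    refine card_le_succ_of_pairwise_close hγ hb.1.2 (fun h hh => ?_)
      (fun h hh h' hh' => ⟨i, ?_⟩)
    · simp only [bipartiteBelow, W, mem_filter, mem_powersetCard] at hh
      exact ⟨hh.1.1.2, hh.2⟩
    · simp only [bipartiteBelow, W, mem_filter, Set.mem_Ico] at hh hh'
      rw [abs_sub_lt_iff]
      constructor <;> linarith

lemma card_close_inter_eq_le [Fintype ι] (hγ : FewCloseNeighbours r q γ) {f T : Finset α}
    (hf : #f = r) (hTf : T ⊂ f) :
    #{h ∈ (univ : Finset α).powersetCard r | f ∩ h = T ∧ ∃ i, |γ f i - γ h i| < 1}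
      ≤ 2 * Fintype.card ι * (q + 1) * Fintype.card α ^ (r - 1 - #T) := by
  set W := fun (i : ι) (a : ℝ) =>
    {h ∈ (univ : Finset α).powersetCard r | T ⊆ h ∧ γ h i ∈ Set.Ico a (a + 1)}
  have hW : ∀ i a, #(W i a) ≤ (q + 1) * Fintype.card α ^ (r - 1 - #T) := fun i a =>
    (card_window_le hγ i a (hf ▸ card_lt_card hTf)).trans <| Nat.mul_le_mul_left _ <|
      (Nat.choose_le_pow _ _).trans (Nat.pow_le_pow_left (Nat.sub_le _ _) _)
  calc _ ≤ #((univ : Finset ι).biUnion fun i => W i (γ f i - 1) ∪ W i (γ f i)) := by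
        refine card_le_card fun h hh => ?_
        simp only [mem_filter] at hh
        obtain ⟨hhr, hfh, i, hi⟩ := hh
        have hTh : T ⊆ h := hfh ▸ inter_subset_right
        rw [abs_sub_lt_iff] at hi
        simp only [W, mem_biUnion, mem_univ, true_and, mem_union, mem_filter, Set.mem_Ico]
        refine ⟨i, ?_⟩
        rcases lt_or_ge (γ h i) (γ f i) with hlt | hge
        · exact .inl ⟨hhr, hTh, by linarith, by linarith⟩
        · exact .inr ⟨hhr, hTh, hge, by linarith⟩
    _ ≤ ∑ i, #(W i (γ f i - 1) ∪ W i (γ f i)) := card_biUnion_le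
    _ ≤ ∑ _i : ι, 2 * ((q + 1) * Fintype.card α ^ (r - 1 - #T)) :=
        sum_le_sum fun i _ => (card_union_le _ _).trans <| by
          linarith [hW i (γ f i - 1), hW i (γ f i)]
    _ = _ := by rw [sum_const, card_univ, smul_eq_mul]; ring

/- `m ^ #u * n ^ (2r - #u)` is `n ^ (2r)` times the bound `(m / n) ^ #u` on the probability that
a random `m`-subset of an `n`-set contains `u`. -/
lemma sum_close_inter_eq_weight_le [Fintype ι] (hγ : FewCloseNeighbours r q γ) {m : ℕ}
    (hm : 1 ≤ m) {f T : Finset α} (hf : #f = r) (hTf : T ⊂ f) :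
    ∑ h ∈ (univ : Finset α).powersetCard r with f ∩ h = T ∧ ∃ i, |γ f i - γ h i| < 1,
        m ^ #(f ∪ h) * Fintype.card α ^ (2 * r - #(f ∪ h))
      ≤ 2 * Fintype.card ι * (q + 1) * Fintype.card α ^ (r - 1) * m ^ (2 * r) := by
  set n := Fintype.card α
  have hT : #T < r := hf ▸ card_lt_card hTf
  have hweight : ∀ h ∈ {h ∈ (univ : Finset α).powersetCard r |
      f ∩ h = T ∧ ∃ i, |γ f i - γ h i| < 1},
      m ^ #(f ∪ h) * n ^ (2 * r - #(f ∪ h)) = m ^ (2 * r - #T) * n ^ #T := by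
    intro h hh
    simp only [mem_filter, mem_powersetCard] at hh
    have := card_union_add_card_inter f h
    rw [hh.2.1] at this
    rw [show #(f ∪ h) = 2 * r - #T by omega, show 2 * r - (2 * r - #T) = #T by omega]
  rw [sum_congr rfl hweight, sum_const, smul_eq_mul]
  calc _ ≤ 2 * Fintype.card ι * (q + 1) * n ^ (r - 1 - #T) * (m ^ (2 * r) * n ^ #T) :=
        Nat.mul_le_mul (card_close_inter_eq_le hγ hf hTf)
          (Nat.mul_le_mul_right _ (Nat.pow_le_pow_right hm (Nat.sub_le _ _)))
    _ = 2 * Fintype.card ι * (q + 1) * n ^ (r - 1 - #T + #T) * m ^ (2 * r) := by ring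
    _ = _ := by rw [Nat.sub_add_cancel (by omega)]

lemma sum_close_weight_le [Fintype ι] (hγ : FewCloseNeighbours r q γ) {m : ℕ} (hm : 1 ≤ m)
    {f : Finset α} (hf : #f = r) :
    ∑ h ∈ (univ : Finset α).powersetCard r with f ≠ h ∧ ∃ i, |γ f i - γ h i| < 1,
        m ^ #(f ∪ h) * Fintype.card α ^ (2 * r - #(f ∪ h))
      ≤ 2 ^ r * (2 * Fintype.card ι * (q + 1) * Fintype.card α ^ (r - 1) * m ^ (2 * r)) := by
  rw [← sum_fiberwise_of_maps_to (g := (f ∩ ·)) (t := f.ssubsets) ?_]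
  · calc _ ≤ ∑ _T ∈ f.ssubsets,
            2 * Fintype.card ι * (q + 1) * Fintype.card α ^ (r - 1) * m ^ (2 * r) :=
          sum_le_sum fun T hT => ?_
      _ ≤ _ := by
          rw [sum_const, smul_eq_mul, ← hf, ← card_powerset]
          exact Nat.mul_le_mul_right _ (card_le_card (erase_subset _ _))
    rw [filter_filter]
    refine (sum_le_sum_of_subset fun h hh => ?_).trans
      (sum_close_inter_eq_weight_le hγ hm hf (mem_ssubsets.1 hT))
    simp only [mem_filter] at hh ⊢
    exact ⟨hh.1, hh.2.2, hh.2.1.2⟩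
  · intro h hh
    simp only [mem_filter, mem_powersetCard] at hh
    refine mem_ssubsets.2 (ssubset_of_subset_of_ne inter_subset_left fun heq => hh.2.1 ?_)
    exact eq_of_subset_of_card_le (inter_eq_left.1 heq) (by omega)

lemma sum_closePairs_weight_le [Fintype ι] (hγ : FewCloseNeighbours r q γ) (hr : 1 ≤ r)
    {m : ℕ} (hm : 1 ≤ m) :
    ∑ p ∈ closePairs r γ, m ^ #(p.1 ∪ p.2) * Fintype.card α ^ (2 * r - #(p.1 ∪ p.2))
      ≤ 2 ^ (r + 1) * Fintype.card ι * (q + 1) * m ^ (2 * r) *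
          Fintype.card α ^ (2 * r - 1) := by
  set n := Fintype.card α
  rw [closePairs, sum_filter, sum_product]
  simp only [← sum_filter]
  calc _ ≤ ∑ _f ∈ (univ : Finset α).powersetCard r,
          2 ^ r * (2 * Fintype.card ι * (q + 1) * n ^ (r - 1) * m ^ (2 * r)) :=
        sum_le_sum fun f hf => sum_close_weight_le hγ hm (mem_powersetCard.1 hf).2
    _ ≤ n ^ r * (2 ^ r * (2 * Fintype.card ι * (q + 1) * n ^ (r - 1) * m ^ (2 * r))) := by
        rw [sum_const, card_powersetCard, card_univ, smul_eq_mul]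
        exact Nat.mul_le_mul_right _ (Nat.choose_le_pow _ _)
    _ = 2 ^ (r + 1) * Fintype.card ι * (q + 1) * m ^ (2 * r) * n ^ (r + (r - 1)) := by ring
    _ = _ := by rw [show r + (r - 1) = 2 * r - 1 by omega]

lemma card_superset_mul_pow_le {u : Finset α} {m : ℕ} (hm : m ≤ Fintype.card α) :
    #{S ∈ (univ : Finset α).powersetCard m | u ⊆ S} * Fintype.card α ^ #u
      ≤ (Fintype.card α).choose m * m ^ #u := by
  by_cases hu : #u ≤ m
  · rw [card_filter_powersetCard_subset u univ m (subset_univ u) hu, card_univ]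
    exact Nat.choose_sub_mul_pow_le hu hm
  · rw [filter_false_of_mem fun S hS huS =>
      hu ((card_le_card huS).trans (mem_powersetCard.1 hS).2.le)]
    simp

lemma sum_card_closePairs_subset_mul_le {m : ℕ} (hmn : m ≤ Fintype.card α) :
    (∑ S ∈ (univ : Finset α).powersetCard m, #{p ∈ closePairs r γ | p.1 ∪ p.2 ⊆ S}) *
        Fintype.card α ^ (2 * r)
      ≤ (Fintype.card α).choose m *
        ∑ p ∈ closePairs r γ,
          m ^ #(p.1 ∪ p.2) * Fintype.card α ^ (2 * r - #(p.1 ∪ p.2)) := by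
  set n := Fintype.card α
  set 𝒮 := (univ : Finset α).powersetCard m
  have hswap : ∑ S ∈ 𝒮, #{p ∈ closePairs r γ | p.1 ∪ p.2 ⊆ S}
      = ∑ p ∈ closePairs r γ, #{S ∈ 𝒮 | p.1 ∪ p.2 ⊆ S} := by
    simp only [card_filter]
    exact sum_comm
  rw [hswap, sum_mul, mul_sum]
  refine sum_le_sum fun p hp => ?_
  simp only [closePairs, mem_filter, mem_product, mem_powersetCard] at hp
  set u := p.1 ∪ p.2
  have hu : #u ≤ 2 * r := (card_union_le _ _).trans (by omega)
  calc _ = #{S ∈ 𝒮 | u ⊆ S} * n ^ #u * n ^ (2 * r - #u) := by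
        rw [mul_assoc, ← pow_add, Nat.add_sub_cancel' hu]
    _ ≤ n.choose m * m ^ #u * n ^ (2 * r - #u) :=
        Nat.mul_le_mul_right _ (card_superset_mul_pow_le hmn)
    _ = _ := mul_assoc _ _ _

lemma exists_card_closePairs_subset_le [Fintype ι] (hγ : FewCloseNeighbours r q γ) (hr : 1 ≤ r)
    {m : ℕ} (hm : 1 ≤ m) (hmn : m ≤ Fintype.card α)
    (hK : 2 ^ (r + 3) * Fintype.card ι * (q + 1) * r * m ^ (2 * r - 1) ≤ Fintype.card α) :
    ∃ S ∈ (univ : Finset α).powersetCard m,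
      4 * r * #{p ∈ closePairs r γ | p.1 ∪ p.2 ⊆ S} ≤ m := by
  set n := Fintype.card α
  set 𝒮 := (univ : Finset α).powersetCard m
  have hm2 : m ^ (2 * r) = m ^ (2 * r - 1) * m := by
    rw [← pow_succ, Nat.sub_add_cancel (by omega)]
  have hn2 : n ^ (2 * r) = n ^ (2 * r - 1) * n := by
    rw [← pow_succ, Nat.sub_add_cancel (by omega)]
  have htotal : (∑ S ∈ 𝒮, 4 * r * #{p ∈ closePairs r γ | p.1 ∪ p.2 ⊆ S}) * n ^ (2 * r)
      ≤ (#𝒮 * m) * n ^ (2 * r) := by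
    calc _ = 4 * r *
          ((∑ S ∈ 𝒮, #{p ∈ closePairs r γ | p.1 ∪ p.2 ⊆ S}) * n ^ (2 * r)) := by
          rw [← mul_sum]; ring
      _ ≤ 4 * r * (n.choose m *
            (2 ^ (r + 1) * Fintype.card ι * (q + 1) * m ^ (2 * r) * n ^ (2 * r - 1))) :=
          Nat.mul_le_mul_left _ ((sum_card_closePairs_subset_mul_le hmn).trans
            (Nat.mul_le_mul_left _ (sum_closePairs_weight_le hγ hr hm)))
      _ = n.choose m * (m * n ^ (2 * r - 1)) *
            (2 ^ (r + 3) * Fintype.card ι * (q + 1) * r * m ^ (2 * r - 1)) := by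
          rw [hm2]; ring
      _ ≤ n.choose m * (m * n ^ (2 * r - 1)) * n := Nat.mul_le_mul_left _ hK
      _ = (#𝒮 * m) * n ^ (2 * r) := by rw [card_powersetCard, card_univ, hn2]; ring
  have hne : 𝒮.Nonempty := powersetCard_nonempty.2 (by rwa [card_univ])
  refine exists_le_of_sum_le hne ?_
  rw [sum_const, smul_eq_mul]
  exact Nat.le_of_mul_le_mul_right htotal (pow_pos (by omega) _)

lemma exists_isSeparated_of_card_closePairs_le (hr : 1 ≤ r) (S : Finset α) :
    ∃ U, #S ≤ #U + r * #{p ∈ closePairs r γ | p.1 ∪ p.2 ⊆ S} ∧ IsSeparated r γ U := by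
  set B := {p ∈ closePairs r γ | p.1 ∪ p.2 ⊆ S}
  set D := B.biUnion Prod.fst
  refine ⟨S \ D, ?_, ?_⟩
  · have hD : #D ≤ r * #B := by
      calc #D ≤ ∑ p ∈ B, #p.1 := card_biUnion_le
        _ = ∑ _p ∈ B, r := sum_congr rfl fun p hp => by
          simp only [B, closePairs, mem_filter, mem_product, mem_powersetCard] at hp
          exact hp.1.1.1.2
        _ = r * #B := by rw [sum_const, smul_eq_mul, mul_comm]
    have := card_le_card_sdiff_add_card (s := S) (t := D)
    omega
  · intro f f' hf hf' hfr hf'r hne i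
    by_contra! hclose
    have hfB : (f, f') ∈ B := by
      simp only [B, closePairs, mem_filter, mem_product, mem_powersetCard]
      exact ⟨⟨⟨⟨subset_univ _, hfr⟩, subset_univ _, hf'r⟩, hne, i, hclose⟩,
        union_subset (hf.trans sdiff_subset) (hf'.trans sdiff_subset)⟩
    obtain ⟨x, hx⟩ : f.Nonempty := card_pos.1 (by omega)
    exact (mem_sdiff.1 (hf hx)).2 (mem_biUnion.2 ⟨_, hfB, hx⟩)

lemma exists_isSeparated_of_mul_pow_le [Fintype ι] (hγ : FewCloseNeighbours r q γ) (hr : 1 ≤ r)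
    {m : ℕ} (hm : 1 ≤ m) (hmn : m ≤ Fintype.card α)
    (hK : 2 ^ (r + 3) * Fintype.card ι * (q + 1) * r * m ^ (2 * r - 1) ≤ Fintype.card α) :
    ∃ U : Finset α, 3 * m ≤ 4 * #U ∧ IsSeparated r γ U := by
  obtain ⟨S, hS, hSclose⟩ := exists_card_closePairs_subset_le hγ hr hm hmn hK
  obtain ⟨U, hU, hsep⟩ := exists_isSeparated_of_card_closePairs_le (γ := γ) hr S
  rw [(mem_powersetCard.1 hS).2] at hU
  exact ⟨U, by linarith, hsep⟩

end Counting

theorem stmt_5_general (r s q : ℕ) (hr : 1 ≤ r) (hs : 1 ≤ s) :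
    ∃ c : ℝ, 0 < c ∧
      ∀ (N : ℕ) (γ : Finset (Fin N) → Fin s → ℝ),
        (∀ f : Finset (Fin N), f.card = r →
          ({f' : Finset (Fin N) | f'.card = r ∧ (f ∩ f').card = r - 1 ∧
              ∃ i : Fin s, |γ f i - γ f' i| < 1}).ncard ≤ q) →
        ∃ U : Finset (Fin N),
          c * (N : ℝ) ^ ((1 : ℝ) / (2 * (r : ℝ) - 1)) ≤ (U.card : ℝ) ∧
          ∀ f f' : Finset (Fin N), f ⊆ U → f' ⊆ U → f.card = r → f'.card = r →
            f ≠ f' → ∀ i : Fin s, 1 ≤ |γ f i - γ f' i| := by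
  set K := 2 ^ (r + 3) * s * (q + 1) * r
  have hK : 1 ≤ K := Nat.one_le_iff_ne_zero.2 (by positivity)
  refine ⟨1 / (4 * K), by positivity, fun N γ hγ => ?_⟩
  have hexp : 2 * (r : ℝ) - 1 = ((2 * r - 1 : ℕ) : ℝ) := by
    rw [Nat.cast_sub (by omega)]; push_cast; ring
  obtain ⟨U, hU, hsep⟩ : ∃ U : Finset (Fin N),
      (N : ℝ) ^ ((1 : ℝ) / (2 * r - 1 : ℕ)) ≤ 4 * K * #U ∧ IsSeparated r γ U := by
    rcases lt_or_ge N K with hNK | hKN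
    · obtain ⟨U, hU, hsep⟩ :=
        exists_isSeparated_of_card_lt (γ := γ) (d := 2 * r - 1) (by omega) (by simpa using hNK)
      simp only [Fintype.card_fin] at hU
      exact ⟨U, hU.trans (by gcongr; linarith), hsep⟩
    · obtain ⟨m, hm, hmN, hNm⟩ :=
        exists_mul_pow_le_and_rpow_le hK hKN (d := 2 * r - 1) (by omega)
      have hmN' : m ≤ N :=
        (Nat.le_self_pow (by omega) m).trans ((Nat.le_mul_of_pos_left _ hK).trans hmN)
      obtain ⟨U, hU, hsep⟩ := exists_isSeparated_of_mul_pow_le hγ hr hm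
        (by simpa using hmN') (by simpa using hmN)
      refine ⟨U, hNm.trans ?_, hsep⟩
      have : (3 : ℝ) * m ≤ 4 * #U := by exact_mod_cast hU
      nlinarith
  refine ⟨U, ?_, hsep⟩
  rw [hexp, div_mul_eq_mul_div, one_mul, div_le_iff₀ (by positivity)]
  linarith

/-- The rainbow/deletion lemma (Lemma 2.4). -/
theorem stmt_5 (r s q : ℕ) (hr : 1 ≤ r) (hs : 1 ≤ s) (hq : 1 ≤ q) :
    ∃ c : ℝ, 0 < c ∧
      ∀ (N : ℕ) (γ : Finset (Fin N) → Fin s → ℝ),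
        (∀ f : Finset (Fin N), f.card = r →
          ({f' : Finset (Fin N) | f'.card = r ∧ (f ∩ f').card = r - 1 ∧
              ∃ i : Fin s, |γ f i - γ f' i| < 1}).ncard ≤ q) →
        ∃ U : Finset (Fin N),
          c * (N : ℝ) ^ ((1 : ℝ) / (2 * (r : ℝ) - 1)) ≤ (U.card : ℝ) ∧
          ∀ f f' : Finset (Fin N), f ⊆ U → f' ⊆ U → f.card = r → f'.card = r →
            f ≠ f' → ∀ i : Fin s, 1 ≤ |γ f i - γ f' i| :=
  stmt_5_general r s q hr hs
end

section
/- Let σ : S^{(2)} → ℝ where S = [N_2], and suppose: (a) for every a ∈ S, the sequence {σ(a,b)}_{b=a+1,...,N_2} is exponential (type T1), i.e. 0 ≤ 2σ(a,b) ≤ σ(a,b+1); and (b) for every d < e ≤ N_2, the sequence {σ(a,e) − σ(a,d)}_{a=1,...,d−1} is exponential (type T1), i.e. 0 ≤ 2(σ(a,e)−σ(a,d)) ≤ σ(a+1,e)−σ(a+1,d). Then for all even a, b ∈ S with a + 2 < b, we have 0 ≤ 2σ(a,b) ≤ σ(a+2,b); in particular, restricted to the even elements S_3 of S, for every b ∈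 S_3 the sequence {σ(a,b)}_{a ∈ S_3, a < b} is exponential. -/
/-!
Chaining the difference columns at `a` and `a + 1` gives
`4 (σ(a,b) - σ(a,a+3)) ≤ σ(a+2,b) - σ(a+2,a+3)`. The row at `a + 2` makes `σ(a+2,a+3) ≥ 0`,
and the row at `a` gives `2 σ(a,a+3) ≤ σ(a,a+4) ≤ σ(a,b)`, which absorbs the error term
as soon as `a + 4 ≤ b`; for even `a < b` this follows from `a + 2 < b`.
-/

theorem le_of_exponential_of_le {f : ℕ → ℝ} {m M : ℕ}
    (hf : ∀ n, m ≤ n → n + 1 ≤ M → 0 ≤ 2 * f n ∧ 2 * f n ≤ f (n + 1))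
    {i j : ℕ} (hmi : m ≤ i) (hij : i ≤ j) (hjM : j ≤ M) : f i ≤ f j := by
  induction j, hij using Nat.le_induction with
  | base => rfl
  | succ n hin ih =>
    obtain ⟨h0, h1⟩ := hf n (hmi.trans hin) hjM
    linarith [ih (by omega)]

section ExponentialRowsAndColumns

variable {N₂ : ℕ} {σ : ℕ → ℕ → ℝ}
  (hrow : ∀ a b : ℕ, 1 ≤ a → a < b → b + 1 ≤ N₂ →
    0 ≤ 2 * σ a b ∧ 2 * σ a b ≤ σ a (b + 1))
  (hcol : ∀ a d e : ℕ, 1 ≤ a → a + 1 < d → d < e → e ≤ N₂ →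
    0 ≤ 2 * (σ a e - σ a d) ∧ 2 * (σ a e - σ a d) ≤ σ (a + 1) e - σ (a + 1) d)
include hrow

theorem nonneg_of_exponential_rows {a b : ℕ} (ha : 1 ≤ a) (hab : a + 1 < b) (hbN : b ≤ N₂) :
    0 ≤ σ a b := by
  obtain ⟨h0, h1⟩ := hrow a (b - 1) ha (by omega) (by omega)
  rw [Nat.sub_add_cancel (by omega)] at h1
  linarith

include hcol in
theorem two_mul_le_of_exponential_rows_cols {a b : ℕ} (ha : 1 ≤ a) (hab : a + 4 ≤ b)
    (hbN : b ≤ N₂) : 2 * σ a b ≤ σ (a + 2) b := by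
  have hcol₀ := (hcol a (a + 3) b ha (by omega) (by omega) hbN).2
  have hcol₁ := (hcol (a + 1) (a + 3) b (by omega) (by omega) (by omega) hbN).2
  have hσ₂ := (hrow (a + 2) (a + 3) (by omega) (by omega) (by omega)).1
  have hrow₀ := (hrow a (a + 3) ha (by omega) (by omega)).2
  have hmono : σ a (a + 4) ≤ σ a b :=
    le_of_exponential_of_le (f := σ a) (m := a + 1) (M := N₂)
      (fun n hn hnN ↦ hrow a n ha hn hnN) (by omega) hab hbN
  linarith

end ExponentialRowsAndColumns

/-- The inequality-chasing step of Section 4: if all rows and all difference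
columns of `σ` are exponential (type T1), then the columns restricted to even
indices are exponential. -/
theorem stmt_14 (N₂ : ℕ) (σ : ℕ → ℕ → ℝ)
    (hrow : ∀ a b : ℕ, 1 ≤ a → a < b → b + 1 ≤ N₂ →
      0 ≤ 2 * σ a b ∧ 2 * σ a b ≤ σ a (b + 1))
    (hcol : ∀ a d e : ℕ, 1 ≤ a → a + 1 < d → d < e → e ≤ N₂ →
      0 ≤ 2 * (σ a e - σ a d) ∧
        2 * (σ a e - σ a d) ≤ σ (a + 1) e - σ (a + 1) d) :
    ∀ a b : ℕ, Even a → Even b → 1 ≤ a → a + 2 < b → b ≤ N₂ →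
      0 ≤ 2 * σ a b ∧ 2 * σ a b ≤ σ (a + 2) b := by
  intro a b ha hb h1 hab hbN
  have hab₄ : a + 4 ≤ b := by
    obtain ⟨i, rfl⟩ := ha
    obtain ⟨j, rfl⟩ := hb
    omega
  exact ⟨by linarith [nonneg_of_exponential_rows hrow h1 (by omega) hbN],
    two_mul_le_of_exponential_rows_cols hrow hcol h1 hab₄ hbN⟩
end

section
/- Let r ≥ 2 and s ≥ 1 be integers. For every n there exists N ≤ tw_r(C·n) (for a constant C depending only on r and s) such that every coloring of the r-element subsets of an N-element set with s colors contains a monochromatic subset of size n (all of whose r-subsets get the same color). -/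
/-- The tower function. -/
def tw (k x : ℕ) : ℕ := (fun y => 2 ^ y)^[k - 1] x

/-!
Erdős–Rado stepping up. Call `V` end-homogeneous if the colour of an `(r+1)`-subset of `V`
depends only on its `r` smallest elements. Such a set is built greedily: take the least
candidate `v`, then keep only the candidates `w` on which the colours of the sets `e ∪ {w}`,
`v ∈ e ⊆ chosen ∪ {v}`, `#e = r`, follow the most popular pattern. With `M` points to choose
there are at most `s ^ M ^ (r - 1)` patterns, so `(s ^ M ^ (r - 1) + 1) ^ M` candidates suffice.
Colouring an `r`-set `e` of an end-homogeneous `V` of size `N + 1` by the colour of `e ∪ {max V}`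
reduces the problem for `r + 1` to the problem for `r` on `N` points. The resulting bound
`2 ^ (s * (N + 1) ^ r)` for `r + 1` costs one more level of the tower.
-/

open Finset

lemma two_pow_add_le (a b : ℕ) : 2 ^ a + b ≤ 2 ^ (a + b) := by
  have h1 : 1 ≤ 2 ^ a := Nat.one_le_two_pow
  have h2 : b < 2 ^ b := Nat.lt_two_pow_self
  rw [pow_add]
  nlinarith

lemma tw_succ {k : ℕ} (hk : k ≠ 0) (x : ℕ) : tw (k + 1) x = 2 ^ tw k x := by
  obtain ⟨j, rfl⟩ := Nat.exists_eq_succ_of_ne_zero hk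
  exact Function.iterate_succ_apply' _ _ _

lemma tw_add_le (k x b : ℕ) : tw k x + b ≤ tw k (x + b) := by
  unfold tw
  induction k - 1 with
  | zero => rfl
  | succ j ih =>
    simp only [Function.iterate_succ_apply']
    exact (two_pow_add_le _ _).trans (Nat.pow_le_pow_right two_pos ih)

lemma tw_mono (k : ℕ) : Monotone (tw k) := fun x y hxy =>
  calc tw k x ≤ tw k x + (y - x) := Nat.le_add_right _ _
    _ ≤ tw k (x + (y - x)) := tw_add_le k x (y - x)
    _ = tw k y := by rw [Nat.add_sub_cancel' hxy]

lemma le_tw (k x : ℕ) : x ≤ tw k x :=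
  calc x ≤ tw k 0 + x := Nat.le_add_left _ _
    _ ≤ tw k (0 + x) := tw_add_le k 0 x
    _ = tw k x := by rw [zero_add]

lemma mul_tw_le (k : ℕ) {a x : ℕ} (ha : 2 ≤ a) (hx : 2 ≤ x) :
    a * tw k x ≤ tw k (a * x) := by
  rcases k with _ | _ | k
  · rfl
  · rfl
  rw [tw_succ k.succ_ne_zero, tw_succ k.succ_ne_zero]
  have hexp : tw (k + 1) x + a ≤ tw (k + 1) (a * x) :=
    (tw_add_le _ x a).trans (tw_mono _ (by nlinarith))
  calc a * 2 ^ tw (k + 1) x ≤ 2 ^ a * 2 ^ tw (k + 1) x :=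
        Nat.mul_le_mul_right _ Nat.lt_two_pow_self.le
    _ = 2 ^ (tw (k + 1) x + a) := by rw [pow_add, mul_comm]
    _ ≤ 2 ^ tw (k + 1) (a * x) := Nat.pow_le_pow_right two_pos hexp

lemma tw_pow_le {k x : ℕ} (hk : k ≠ 0) (hx : 2 ≤ x) : tw k x ^ k ≤ tw k (k * x) := by
  rcases k with _ | _ | k
  · exact absurd rfl hk
  · simp [tw]
  rw [tw_succ k.succ_ne_zero, tw_succ k.succ_ne_zero, ← pow_mul, mul_comm]
  exact Nat.pow_le_pow_right two_pos (mul_tw_le _ (by omega) hx)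

def IsRamseyBound (α : Type*) [LinearOrder α] (s r n N : ℕ) : Prop :=
  ∀ A : Finset α, N ≤ #A → ∀ χ : Finset α → Fin s,
    ∃ T ⊆ A, n ≤ #T ∧ ∃ c, ∀ f ⊆ T, #f = r → χ f = c

section Ramsey

variable {α : Type*} [LinearOrder α] {s : ℕ}

/-- `EndHomogeneous χ r V V` says that `V` is end-homogeneous; the relative version, with `P`
the points chosen so far and `A` the remaining candidates, is the invariant of the greedy
construction. -/
def EndHomogeneous (χ : Finset α → Fin s) (r : ℕ) (P A : Finset α) : Prop :=
  ∀ e ⊆ P, #e = r → ∀ w ∈ A, ∀ w' ∈ A,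
    (∀ x ∈ e, x < w) → (∀ x ∈ e, x < w') → χ (insert w e) = χ (insert w' e)

variable {χ : Finset α → Fin s} {r : ℕ}

theorem EndHomogeneous.mono {P P' A A' : Finset α}
    (h : EndHomogeneous χ r P A) (hP : P' ⊆ P) (hA : A' ⊆ A) : EndHomogeneous χ r P' A' :=
  fun e he hcard w hw w' hw' => h e (he.trans hP) hcard w (hA hw) w' (hA hw')

theorem EndHomogeneous.exists_insert {M m : ℕ} {P A : Finset α}
    (hA : EndHomogeneous χ r P A) (hPM : #P ≤ M) (v : α) (hcard : s ^ M ^ (r - 1) * m ≤ #A) :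
    ∃ B ⊆ A, m ≤ #B ∧ EndHomogeneous χ r (insert v P) B := by
  let pattern : α → (P.powersetCard (r - 1) → Fin s) := fun w e => χ (insert w (insert v e))
  have hpatterns : #(univ : Finset (P.powersetCard (r - 1) → Fin s)) ≤ s ^ M ^ (r - 1) := by
    rw [card_univ, Fintype.card_fun, Fintype.card_coe, card_powersetCard, Fintype.card_fin]
    exact Nat.pow_le_pow_right (χ ∅).pos
      ((Nat.choose_le_pow _ _).trans (Nat.pow_le_pow_left hPM _))
  obtain ⟨p, -, hp⟩ := exists_le_card_fiber_of_mul_le_card_of_maps_to (f := pattern)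
    (fun _ _ => mem_univ _) ⟨fun _ => χ ∅, mem_univ _⟩
    ((Nat.mul_le_mul_right m hpatterns).trans hcard)
  refine ⟨{w ∈ A | pattern w = p}, filter_subset _ _, hp, ?_⟩
  intro e he hcard w hw w' hw' hew hew'
  by_cases hve : v ∈ e
  · have hmem : e.erase v ∈ P.powersetCard (r - 1) := by
      refine mem_powersetCard.2 ⟨fun x hx => ?_, by rw [card_erase_of_mem hve, hcard]⟩
      exact (mem_insert.1 (he (mem_of_mem_erase hx))).resolve_left (ne_of_mem_erase hx)
    rw [← insert_erase hve]
    exact (congrFun (mem_filter.1 hw).2 ⟨_, hmem⟩).trans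
      (congrFun (mem_filter.1 hw').2 ⟨_, hmem⟩).symm
  · have heP : e ⊆ P := fun x hx =>
      (mem_insert.1 (he hx)).resolve_left (by rintro rfl; exact hve hx)
    exact hA e heP hcard w (filter_subset _ _ hw) w' (filter_subset _ _ hw') hew hew'

theorem EndHomogeneous.insert_of_lt {P A V : Finset α} {v : α}
    (hA : EndHomogeneous χ r P A) (hV : EndHomogeneous χ r (insert v P ∪ V) V)
    (hvA : v ∈ A) (hVA : V ⊆ A) (hvV : ∀ a ∈ V, v < a) :
    EndHomogeneous χ r (P ∪ insert v V) (insert v V) := by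
  rw [union_insert, ← insert_union]
  have hbelow : ∀ e ⊆ insert v P ∪ V, (∀ x ∈ e, x < v) → e ⊆ P := by
    intro e he hev x hx
    rcases mem_union.1 (he hx) with hxP | hxV
    · exact (mem_insert.1 hxP).resolve_left (hev x hx).ne
    · exact absurd (hvV x hxV) (hev x hx).not_gt
  intro e he hcard w hw w' hw' hew hew'
  rcases mem_insert.1 hw with rfl | hwV <;> rcases mem_insert.1 hw' with rfl | hw'V
  · rfl
  · exact hA e (hbelow e he hew) hcard _ hvA w' (hVA hw'V) hew hew'
  · exact hA e (hbelow e he hew') hcard w (hVA hwV) _ hvA hew hew'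
  · exact hV e he hcard w hwV w' hw'V hew hew'

theorem exists_endHomogeneous (M m : ℕ) {P A : Finset α}
    (hPM : #P + m ≤ M) (hPA : ∀ p ∈ P, ∀ a ∈ A, p < a) (hA : EndHomogeneous χ r P A)
    (hcard : (s ^ M ^ (r - 1) + 1) ^ m ≤ #A) :
    ∃ V ⊆ A, #V = m ∧ EndHomogeneous χ r (P ∪ V) V := by
  induction m generalizing P A with
  | zero => exact ⟨∅, empty_subset _, rfl, fun _ _ _ w hw => absurd hw (notMem_empty w)⟩
  | succ m ih =>
    set K := s ^ M ^ (r - 1)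
    have hAne : A.Nonempty := card_pos.1 (lt_of_lt_of_le (by positivity) hcard)
    set v := A.min' hAne
    have hvA : v ∈ A := min'_mem A hAne
    have hcard' : K * (K + 1) ^ m ≤ #(A.erase v) := by
      have : 1 ≤ (K + 1) ^ m := Nat.one_le_pow _ _ (Nat.succ_pos K)
      rw [card_erase_of_mem hvA]
      rw [pow_succ, mul_add_one, mul_comm] at hcard
      omega
    obtain ⟨B, hBA, hB, hBend⟩ :=
      (hA.mono subset_rfl (erase_subset v A)).exists_insert (by omega) v hcard'
    have hvB : ∀ b ∈ B, v < b := fun b hb => min'_lt_of_mem_erase_min' A hAne (hBA hb)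
    have hPB : ∀ p ∈ insert v P, ∀ b ∈ B, p < b := by
      intro p hp b hb
      rcases mem_insert.1 hp with rfl | hp
      · exact hvB b hb
      · exact hPA p hp b (mem_of_mem_erase (hBA hb))
    obtain ⟨V, hVB, hV, hVend⟩ :=
      ih (by have := card_insert_le v P; omega) hPB hBend hB
    have hVA : V ⊆ A := hVB.trans (hBA.trans (erase_subset v A))
    have hvV : ∀ a ∈ V, v < a := fun a ha => hvB a (hVB ha)
    refine ⟨insert v V, insert_subset hvA hVA, ?_, hA.insert_of_lt hVend hvA hVA hvV⟩
    rw [card_insert_of_notMem (fun hv => (hvV v hv).false), hV]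

theorem IsRamseyBound.succ {n R : ℕ} (hr : r ≠ 0) (h : IsRamseyBound α s r n R) :
    IsRamseyBound α s (r + 1) n ((s ^ (R + 1) ^ (r - 1) + 1) ^ (R + 1)) := by
  intro A hA χ
  have hempty : EndHomogeneous χ r ∅ A := fun e he hcard => by
    rw [subset_empty.1 he, card_empty] at hcard
    exact absurd hcard.symm hr
  obtain ⟨V, hVA, hV, hVend⟩ :=
    exists_endHomogeneous (R + 1) (R + 1) (by simp) (by simp) hempty hA
  rw [empty_union] at hVend
  have hVne : V.Nonempty := card_pos.1 (by omega)
  set z := V.max' hVne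
  obtain ⟨T, hTV, hnT, c, hc⟩ := h (V.erase z)
    (by rw [card_erase_of_mem (max'_mem V hVne), hV]; rfl) (fun e => χ (insert z e))
  have hTV' : T ⊆ V := hTV.trans (erase_subset z V)
  refine ⟨T, hTV'.trans hVA, hnT, c, fun f hfT hf => ?_⟩
  have hfne : f.Nonempty := card_pos.1 (by omega)
  set y := f.max' hfne
  have hyf : y ∈ f := max'_mem f hfne
  have heT : f.erase y ⊆ T := (erase_subset y f).trans hfT
  have hecard : #(f.erase y) = r := by rw [card_erase_of_mem hyf, hf]; rfl
  -- `f` and `insert z (f.erase y)` agree on their `r` smallest elements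
  calc χ f = χ (insert y (f.erase y)) := by rw [insert_erase hyf]
    _ = χ (insert z (f.erase y)) :=
      hVend _ (heT.trans hTV') hecard y (hTV' (hfT hyf)) z (max'_mem V hVne)
        (fun x hx => lt_max'_of_mem_erase_max' f hfne hx)
        (fun x hx => lt_max'_of_mem_erase_max' V hVne (hTV (heT hx)))
    _ = c := hc _ heT hecard

theorem isRamseyBound_zero (n : ℕ) : IsRamseyBound α s 0 n n :=
  fun A hA χ => ⟨A, subset_rfl, hA, χ ∅, fun f _ hf => by rw [card_eq_zero.1 hf]⟩

theorem isRamseyBound_one (n : ℕ) : IsRamseyBound α s 1 n (s * n) := by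
  intro A hA χ
  obtain ⟨c, -, hc⟩ := exists_le_card_fiber_of_mul_le_card_of_maps_to (f := fun a => χ {a})
    (fun _ _ => mem_univ _) ⟨χ ∅, mem_univ _⟩ (by rwa [card_univ, Fintype.card_fin])
  refine ⟨_, filter_subset _ A, hc, c, fun f hf hcard => ?_⟩
  obtain ⟨a, rfl⟩ := card_eq_one.1 hcard
  exact (mem_filter.1 (hf (mem_singleton_self a))).2

end Ramsey

def erdosRadoBound (s : ℕ) : ℕ → ℕ → ℕ
  | 0, n => n
  | 1, n => s * n
  | r + 2, n => (s ^ (erdosRadoBound s (r + 1) n + 1) ^ r + 1) ^ (erdosRadoBound s (r + 1) n + 1)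

theorem isRamseyBound_erdosRadoBound {α : Type*} [LinearOrder α] (s : ℕ) :
    ∀ r n, IsRamseyBound α s r n (erdosRadoBound s r n)
  | 0, n => isRamseyBound_zero n
  | 1, n => isRamseyBound_one n
  | r + 2, n => (isRamseyBound_erdosRadoBound s (r + 1) n).succ r.succ_ne_zero

lemma erdosRadoBound_succ_le (s : ℕ) {r : ℕ} (hr : r ≠ 0) (n : ℕ) :
    erdosRadoBound s (r + 1) n ≤ 2 ^ (s * (erdosRadoBound s r n + 1) ^ r) := by
  obtain ⟨j, rfl⟩ := Nat.exists_eq_succ_of_ne_zero hr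
  set M := erdosRadoBound s (j + 1) n + 1
  change (s ^ M ^ j + 1) ^ M ≤ 2 ^ (s * M ^ (j + 1))
  calc (s ^ M ^ j + 1) ^ M ≤ ((s + 1) ^ M ^ j) ^ M := by
        gcongr
        have hM : M ^ j ≠ 0 := pow_ne_zero j (Nat.succ_ne_zero _)
        simpa using pow_add_pow_le (Nat.zero_le s) zero_le_one hM
    _ ≤ ((2 ^ s) ^ M ^ j) ^ M := by gcongr; exact Nat.lt_two_pow_self
    _ = 2 ^ (s * M ^ (j + 1)) := by rw [← pow_mul, ← pow_mul, pow_succ]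

theorem exists_erdosRadoBound_le_tw (s : ℕ) {r : ℕ} (hr : 1 ≤ r) :
    ∃ C, 2 ≤ C ∧ ∀ n, n ≠ 0 → erdosRadoBound s r n ≤ tw r (C * n) := by
  induction r, hr using Nat.le_induction with
  | base => exact ⟨s + 2, by omega, fun n _ => Nat.mul_le_mul_right n (by omega)⟩
  | succ r hr ih =>
    obtain ⟨C, hC, hbound⟩ := ih
    have h2r : 2 ≤ (s + 1) * 2 ^ r :=
      le_mul_of_one_le_of_le (by omega) (Nat.le_self_pow (by omega) 2)
    refine ⟨(s + 1) * 2 ^ r * (r * C), ?_, fun n hn => ?_⟩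
    · exact le_mul_of_le_of_one_le h2r (Nat.one_le_iff_ne_zero.2 (by positivity))
    set t := tw r (C * n)
    have hCn : 2 ≤ C * n := le_mul_of_le_of_one_le hC (Nat.one_le_iff_ne_zero.2 hn)
    have ht : 2 ≤ t := hCn.trans (le_tw r _)
    have hexp : s * (erdosRadoBound s r n + 1) ^ r ≤ tw r ((s + 1) * 2 ^ r * (r * C) * n) :=
      calc s * (erdosRadoBound s r n + 1) ^ r ≤ (s + 1) * (2 * t) ^ r := by
            gcongr
            · omega
            · have := hbound n hn; omega
        _ = (s + 1) * 2 ^ r * t ^ r := by ring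
        _ ≤ (s + 1) * 2 ^ r * tw r (r * (C * n)) := by gcongr; exact tw_pow_le (by omega) hCn
        _ ≤ tw r ((s + 1) * 2 ^ r * (r * (C * n))) :=
            mul_tw_le r h2r (le_mul_of_one_le_of_le hr hCn)
        _ = tw r ((s + 1) * 2 ^ r * (r * C) * n) := by ring_nf
    calc erdosRadoBound s (r + 1) n ≤ 2 ^ (s * (erdosRadoBound s r n + 1) ^ r) :=
          erdosRadoBound_succ_le s (by omega) n
      _ ≤ 2 ^ tw r ((s + 1) * 2 ^ r * (r * C) * n) := Nat.pow_le_pow_right two_pos hexp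
      _ = tw (r + 1) ((s + 1) * 2 ^ r * (r * C) * n) := (tw_succ (by omega) _).symm

theorem stmt_17_general (r s : ℕ) (hr : 2 ≤ r) :
    ∃ C : ℕ, ∀ n : ℕ, ∃ N : ℕ, N ≤ tw r (C * n) ∧
      ∀ χ : Finset (Fin N) → Fin s,
        ∃ T : Finset (Fin N), n ≤ T.card ∧
          ∃ color : Fin s, ∀ f ⊆ T, f.card = r → χ f = color := by
  obtain ⟨C, -, hC⟩ := exists_erdosRadoBound_le_tw s (by omega : 1 ≤ r)
  refine ⟨C, fun n => ?_⟩
  rcases eq_or_ne n 0 with rfl | hn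
  · refine ⟨0, Nat.zero_le _, fun χ => ⟨∅, le_rfl, χ ∅, fun f hf hcard => ?_⟩⟩
    rw [subset_empty.1 hf, card_empty] at hcard
    omega
  · refine ⟨erdosRadoBound s r n, hC n hn, fun χ => ?_⟩
    obtain ⟨T, -, hT⟩ := isRamseyBound_erdosRadoBound s r n univ
      (by rw [card_univ, Fintype.card_fin]) χ
    exact ⟨T, hT⟩

/-- Quantitative Ramsey theorem of Erdős and Rado: for constants `r ≥ 2` and
`s ≥ 1` there is a constant `C` such that for every `n` there exists
`N ≤ tw r (C * n)` such that every `s`-coloring of the `r`-subsets of an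
`N`-element set admits a monochromatic subset of size `n`. -/
theorem stmt_17 (r s : ℕ) (hr : 2 ≤ r) (hs : 1 ≤ s) :
    ∃ C : ℕ, ∀ n : ℕ, ∃ N : ℕ, N ≤ tw r (C * n) ∧
      ∀ χ : Finset (Fin N) → Fin s,
        ∃ T : Finset (Fin N), n ≤ T.card ∧
          ∃ color : Fin s, ∀ f ⊆ T, f.card = r → χ f = color :=
  stmt_17_general r s hr
end
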